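/- arXiv:1609.08602 — 10 statements merged into one kernel-verified Lean document; each statement's English description precedes it below -/
import Mathlib

section
/- For every integer k ≥ 1, (k+1)! ≤ 2 · k^(k+3/2) / e^(k-1). -/
/-! The Stirling sequence `n! / (√(2n) (n/e)^n)` is decreasing, so for `n ≥ 1` it is at most its
first value `e / √2`, i.e. `n! ≤ e √n (n/e)^n`. Multiplying by `n + 1 ≤ 2n` gives the bound. -/

open Real Stirling Nat

lemma stirlingSeq_le_stirlingSeq_one {n : ℕ} (hn : n ≠ 0) : stirlingSeq n ≤ exp 1 / √2 := by
  obtain ⟨m, rfl⟩ := exists_eq_succ_of_ne_zero hn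
  simpa [stirlingSeq_one] using stirlingSeq'_antitone (Nat.zero_le m)

lemma factorial_le_exp_one_mul_sqrt_mul_pow {n : ℕ} (hn : n ≠ 0) :
    (n ! : ℝ) ≤ exp 1 * √n * (n / exp 1) ^ n := by
  have hfac : (n ! : ℝ) = stirlingSeq n * (√(2 * n) * (n / exp 1) ^ n) := by
    rw [stirlingSeq]
    field_simp
  calc (n ! : ℝ) = stirlingSeq n * (√(2 * n) * (n / exp 1) ^ n) := hfac
    _ ≤ exp 1 / √2 * (√(2 * n) * (n / exp 1) ^ n) := by
        gcongr
        exact stirlingSeq_le_stirlingSeq_one hn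
    _ = exp 1 * √n * (n / exp 1) ^ n := by
        rw [sqrt_mul zero_le_two]
        field_simp

lemma factorial_succ_le_two_mul_mul_factorial {n : ℕ} (hn : n ≠ 0) : (n + 1)! ≤ 2 * n * n ! := by
  rw [factorial_succ]
  exact Nat.mul_le_mul_right _ (by omega)

lemma rpow_natCast_add_three_halves {x : ℝ} (hx : 0 < x) (n : ℕ) :
    x ^ ((n : ℝ) + 3 / 2) = x ^ n * (x * √x) := by
  rw [rpow_add hx, rpow_natCast, show (3 / 2 : ℝ) = 1 + 1 / 2 by norm_num, rpow_add hx,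
    rpow_one, sqrt_eq_rpow]

theorem factorial_upper_bound (k : ℕ) (hk : 1 ≤ k) :
    ((k + 1).factorial : ℝ) ≤ 2 * (k : ℝ) ^ ((k : ℝ) + 3 / 2) / Real.exp ((k : ℝ) - 1) := by
  have hk0 : k ≠ 0 := by omega
  calc ((k + 1)! : ℝ) ≤ 2 * k * k ! := by exact_mod_cast factorial_succ_le_two_mul_mul_factorial hk0
    _ ≤ 2 * k * (exp 1 * √k * (k / exp 1) ^ k) := by
        gcongr
        exact factorial_le_exp_one_mul_sqrt_mul_pow hk0
    _ = 2 * (k : ℝ) ^ ((k : ℝ) + 3 / 2) / exp ((k : ℝ) - 1) := by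
        rw [rpow_natCast_add_three_halves (by positivity), exp_sub, div_pow, exp_one_pow]
        field_simp
end

section
/- The function h1(x) = (1 + 1/x)^(x+1/2) is strictly decreasing on (0, ∞) and tends to e as x → ∞. -/
/-!
Write `h1 x = exp (g x)` with `g x = (x + 1/2) * log (1 + 1/x)`. With `t = 1 + 1/x` one computes
`g' x = log t - (t - t⁻¹) / 2 = log t - sinh (log t)`, which is negative because `s < sinh s`
for `s > 0`; so `g`, and with it `h1`, is strictly decreasing. The limit follows from
`(1 + 1/x) ^ x → e` and `(1 + 1/x) ^ (1/2) → 1`.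
-/

open Real Filter Set Topology

theorem Real.log_lt_half_sub_inv {t : ℝ} (ht : 1 < t) : log t < (t - t⁻¹) / 2 := by
  rw [← sinh_log (by linarith)]
  exact self_lt_sinh_iff.mpr (log_pos ht)

theorem hasDerivAt_add_half_mul_log_one_add_one_div {x : ℝ} (hx : 0 < x) :
    HasDerivAt (fun x : ℝ => (x + 1 / 2) * log (1 + 1 / x))
      (log (1 + 1 / x) - (x + 1 / 2) / (x * (x + 1))) x := by
  have h_base : HasDerivAt (fun x : ℝ => 1 + 1 / x) (-(x ^ 2)⁻¹) x := by
    simpa only [one_div] using (hasDerivAt_inv hx.ne').const_add 1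
  refine (((hasDerivAt_id' x).add_const (1 / 2)).mul (h_base.log (by positivity))).congr_deriv ?_
  field_simp
  ring

theorem strictAntiOn_add_half_mul_log_one_add_one_div :
    StrictAntiOn (fun x : ℝ => (x + 1 / 2) * log (1 + 1 / x)) (Ioi 0) := by
  have h_deriv := fun x (hx : x ∈ Ioi (0 : ℝ)) => hasDerivAt_add_half_mul_log_one_add_one_div hx
  refine strictAntiOn_of_hasDerivWithinAt_neg (convex_Ioi 0)
    (fun x hx => (h_deriv x hx).continuousAt.continuousWithinAt)
    (fun x hx => (h_deriv x (interior_subset hx)).hasDerivWithinAt) fun x hx => ?_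
  rw [interior_Ioi, mem_Ioi] at hx
  have h_sinh : (x + 1 / 2) / (x * (x + 1)) = ((1 + 1 / x) - (1 + 1 / x)⁻¹) / 2 := by
    field_simp
    ring
  have h_log := log_lt_half_sub_inv (t := 1 + 1 / x) (by simpa using hx)
  linarith

theorem h1_strictAnti_tendsto_e :
    StrictAntiOn (fun x : ℝ => (1 + 1 / x) ^ (x + 1 / 2)) (Set.Ioi 0) ∧
      Filter.Tendsto (fun x : ℝ => (1 + 1 / x) ^ (x + 1 / 2)) Filter.atTop
        (nhds (Real.exp 1)) := by
  refine ⟨(exp_strictMono.comp_strictAntiOn strictAntiOn_add_half_mul_log_one_add_one_div).congr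
    fun x (hx : 0 < x) => ?_, ?_⟩
  · rw [Function.comp_apply, rpow_def_of_pos (by positivity), mul_comm]
  · have h_base : Tendsto (fun x : ℝ => 1 + 1 / x) atTop (𝓝 1) := by
      simpa using tendsto_inv_atTop_zero.const_add (1 : ℝ)
    have h_prod := (tendsto_one_add_div_rpow_exp 1).mul
      (h_base.rpow_const (p := 1 / 2) (Or.inl one_ne_zero))
    rw [one_rpow, mul_one] at h_prod
    refine h_prod.congr' (eventually_gt_atTop 0 |>.mono fun x (hx : 0 < x) => ?_)
    exact (rpow_add (by positivity) _ _).symm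
end

section
/- The function h2(x) = ((x+1)/(x+2)) · (1 + 1/x)^(x+3/2) is strictly decreasing on (0, ∞) and tends to e as x → ∞. -/
/-!
Take logarithms. The derivative of `log h₂` is `log u` minus a rational function of `x` that
exceeds `(u - u⁻¹) / 2`, where `u = 1 + 1/x > 1`; and `log u < sinh (log u) = (u - u⁻¹) / 2`.
For the limit, `(1 + 1/x)^x → e` while the remaining factors tend to `1`.
-/

open Real Filter Set Topology

theorem Real.log_lt_sub_inv_div_two {u : ℝ} (hu : 1 < u) : log u < (u - u⁻¹) / 2 := by
  simpa [sinh_log (by linarith : 0 < u)] using self_lt_sinh_iff.mpr (log_pos hu)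

theorem Real.log_add_one_sub_log_lt {x : ℝ} (hx : 0 < x) :
    log (x + 1) - log x < (2 * x + 1) / (2 * x * (x + 1)) := by
  have hu : 1 < (x + 1) / x := by rw [one_lt_div hx]; linarith
  calc log (x + 1) - log x = log ((x + 1) / x) := (log_div (by positivity) hx.ne').symm
    _ < ((x + 1) / x - ((x + 1) / x)⁻¹) / 2 := log_lt_sub_inv_div_two hu
    _ = (2 * x + 1) / (2 * x * (x + 1)) := by field_simp; ring

theorem tendsto_add_div_add_atTop (a b : ℝ) :
    Tendsto (fun x : ℝ => (x + a) / (x + b)) atTop (𝓝 1) := by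
  have hlim : Tendsto (fun x : ℝ => 1 + (a - b) / (x + b)) atTop (𝓝 (1 + 0)) :=
    (tendsto_const_nhds.div_atTop (tendsto_atTop_add_const_right _ b tendsto_id)).const_add 1
  rw [add_zero] at hlim
  refine hlim.congr' ?_
  filter_upwards [eventually_gt_atTop (-b)] with x hx
  field_simp [show x + b ≠ 0 by linarith]
  ring

noncomputable def logH2 (x : ℝ) : ℝ :=
  log (x + 1) - log (x + 2) + (x + 3 / 2) * (log (x + 1) - log x)

theorem exp_logH2 {x : ℝ} (hx : 0 < x) :
    exp (logH2 x) = (x + 1) / (x + 2) * (1 + 1 / x) ^ (x + 3 / 2) := by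
  have hx1 : 0 < x + 1 := by linarith
  have hx2 : 0 < x + 2 := by linarith
  rw [show 1 + 1 / x = (x + 1) / x by field_simp, rpow_def_of_pos (div_pos hx1 hx),
    log_div hx1.ne' hx.ne', ← exp_log (div_pos hx1 hx2), log_div hx1.ne' hx2.ne', ← exp_add,
    logH2]
  ring_nf

theorem hasDerivAt_logH2 {x : ℝ} (hx : 0 < x) :
    HasDerivAt logH2 (log (x + 1) - log x - (2 * x + 1) / (2 * x * (x + 1))
      - 2 / (x * (x + 1) * (x + 2))) x := by
  have hx1 : 0 < x + 1 := by linarith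
  have hx2 : 0 < x + 2 := by linarith
  have h1 := ((hasDerivAt_id' x).add_const 1).log hx1.ne'
  have h2 := ((hasDerivAt_id' x).add_const 2).log hx2.ne'
  have h3 := hasDerivAt_log hx.ne'
  have h4 := (hasDerivAt_id' x).add_const (3 / 2 : ℝ)
  refine ((h1.sub h2).add (h4.mul (h1.sub h3))).congr_deriv ?_
  simp only [Pi.sub_apply]
  field_simp
  ring

theorem strictAntiOn_logH2 : StrictAntiOn logH2 (Ioi 0) := by
  refine strictAntiOn_of_hasDerivWithinAt_neg (convex_Ioi 0)
    (fun x hx => (hasDerivAt_logH2 hx).continuousAt.continuousWithinAt)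
    (fun x hx => (hasDerivAt_logH2 (interior_subset hx)).hasDerivWithinAt) fun x hx => ?_
  have hx : 0 < x := interior_subset hx
  have := log_add_one_sub_log_lt hx
  have : 0 < 2 / (x * (x + 1) * (x + 2)) := by positivity
  linarith

theorem tendsto_one_add_one_div_rpow_add_exp (c : ℝ) :
    Tendsto (fun x : ℝ => (1 + 1 / x) ^ (x + c)) atTop (𝓝 (exp 1)) := by
  have hbase : Tendsto (fun x : ℝ => 1 + 1 / x) atTop (𝓝 1) := by
    simpa using (tendsto_inv_atTop_zero (𝕜 := ℝ)).const_add 1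
  have hlim := (tendsto_one_add_div_rpow_exp 1).mul (hbase.rpow_const (p := c) (Or.inl one_ne_zero))
  rw [one_rpow, mul_one] at hlim
  refine hlim.congr' ?_
  filter_upwards [eventually_gt_atTop 0] with x hx
  rw [← rpow_add (by positivity)]

theorem h2_strictAnti_tendsto_e :
    StrictAntiOn (fun x : ℝ => ((x + 1) / (x + 2)) * (1 + 1 / x) ^ (x + 3 / 2)) (Set.Ioi 0) ∧
      Filter.Tendsto (fun x : ℝ => ((x + 1) / (x + 2)) * (1 + 1 / x) ^ (x + 3 / 2))
        Filter.atTop (nhds (Real.exp 1)) := by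
  refine ⟨(exp_strictMono.comp_strictAntiOn strictAntiOn_logH2).congr fun x hx => exp_logH2 hx, ?_⟩
  simpa using (tendsto_add_div_add_atTop 1 2).mul (tendsto_one_add_one_div_rpow_add_exp (3 / 2))
end

section
/- For every x > 0, (1 + 1/x)^(x+1/2) > e. -/
theorem h1_gt_e (x : ℝ) (hx : 0 < x) :
    Real.exp 1 < (1 + 1 / x) ^ (x + 1 / 2) := by
  rw [Real.rpow_def_of_pos (by positivity), Real.exp_lt_exp]
  calc (1 : ℝ) = 2 * (1 / x) / (1 / x + 2) * (x + 1 / 2) := by field_simp; ring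
    _ < Real.log (1 + 1 / x) * (x + 1 / 2) := by
      gcongr
      exact Real.lt_log_one_add_of_pos (by positivity)
end

section
/- For every x > 0, ((x+1)/(x+2)) · (1 + 1/x)^(x+3/2) > e. -/
/-! Taking logarithms, the claim becomes `1 < (x + 3/2) log (1 + 1/x) - log ((x + 2)/(x + 1))`.
The Padé-type bound `2t/(t + 2) ≤ log (1 + t)` at `t = 1/x` gives
`(x + 3/2) log (1 + 1/x) ≥ 1 + 2/(2x + 1)`, while `log y ≤ y - 1` gives
`log ((x + 2)/(x + 1)) ≤ 1/(x + 1)`, and `1/(x + 1) < 2/(2x + 1)`. -/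

open Real

lemma two_div_two_mul_add_one_le_log_one_add_inv {x : ℝ} (hx : 0 < x) :
    2 / (2 * x + 1) ≤ log (1 + 1 / x) := by
  convert le_log_one_add_of_nonneg (one_div_nonneg.2 hx.le) using 1
  field_simp
  ring

lemma log_add_two_sub_log_add_one_le {x : ℝ} (hx : 0 < x + 1) :
    log (x + 2) - log (x + 1) ≤ 1 / (x + 1) := by
  have h := log_le_sub_one_of_pos (div_pos (by linarith : 0 < x + 2) hx)
  rw [log_div (by linarith) hx.ne'] at h
  calc log (x + 2) - log (x + 1) ≤ (x + 2) / (x + 1) - 1 := h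
    _ = 1 / (x + 1) := by field_simp; ring

theorem h2_gt_e (x : ℝ) (hx : 0 < x) :
    Real.exp 1 < ((x + 1) / (x + 2)) * (1 + 1 / x) ^ (x + 3 / 2) := by
  have hx1 : 0 < x + 1 := by linarith
  have hx2 : 0 < x + 2 := by linarith
  rw [← lt_log_iff_exp_lt (by positivity), log_mul (by positivity) (by positivity),
    log_rpow (by positivity), log_div hx1.ne' hx2.ne']
  have hpade : (x + 3 / 2) * (2 / (2 * x + 1)) ≤ (x + 3 / 2) * log (1 + 1 / x) :=
    mul_le_mul_of_nonneg_left (two_div_two_mul_add_one_le_log_one_add_inv hx) (by linarith)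
  have hgap : 1 + 1 / (x + 1) < (x + 3 / 2) * (2 / (2 * x + 1)) := by
    have key : (x + 3 / 2) * (2 / (2 * x + 1)) - (1 + 1 / (x + 1))
        = 1 / ((2 * x + 1) * (x + 1)) := by
      field_simp
      ring
    have hpos : 0 < 1 / ((2 * x + 1) * (x + 1)) := by positivity
    linarith
  linarith [log_add_two_sub_log_add_one_le hx1]
end

section
/- For every integer n ≥ 1, the partition function satisfies p(n) ≤ exp(π√(2n/3)). -/
/-!
Comparing coefficients in Euler's product gives `p(n) xⁿ ≤ ∏_{k ≤ n} (1 - xᵏ)⁻¹` for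
`0 ≤ x < 1`. Expanding the logarithms and summing over `k` first,
`log ∏_{k ≤ n} (1 - xᵏ)⁻¹ ≤ ∑_{j ≥ 1} xʲ / (j (1 - xʲ)) ≤ ζ(2) x / (1 - x)`,
because `j xʲ⁻¹ (1 - x) ≤ 1 - xʲ`. For `x = e⁻ᵘ` we have `x / (1 - x) ≤ 1 / u`, hence
`p(n) ≤ exp (π² / (6u) + n u)`, and `u = π / √(6n)` balances the two terms.
-/

open Finset Real

section GeomSum

theorem succ_mul_pow_mul_one_sub_le {R : Type*} [CommRing R] [PartialOrder R] [IsOrderedRing R]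
    {x : R} (hx0 : 0 ≤ x) (hx1 : x ≤ 1) (j : ℕ) :
    (j + 1) * x ^ j * (1 - x) ≤ 1 - x ^ (j + 1) := by
  rw [← geom_sum_mul_of_le_one hx1]
  refine mul_le_mul_of_nonneg_right ?_ (sub_nonneg.2 hx1)
  calc (j + 1 : R) * x ^ j = ∑ _ ∈ range (j + 1), x ^ j := by simp
    _ ≤ ∑ i ∈ range (j + 1), x ^ i := sum_le_sum fun i hi =>
        pow_le_pow_of_le_one hx0 hx1 (Nat.lt_succ_iff.1 (mem_range.1 hi))

variable {K : Type*} [Field K] [LinearOrder K] [IsStrictOrderedRing K] {x : K}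

theorem geom_sum_le_inv_one_sub (hx0 : 0 ≤ x) (hx1 : x < 1) (N : ℕ) :
    ∑ j ∈ range N, x ^ j ≤ (1 - x)⁻¹ := by
  simpa using geom_sum_Ico_le_of_lt_one (m := 0) (n := N) hx0 hx1

theorem sum_range_pow_succ_le (hx0 : 0 ≤ x) (hx1 : x < 1) (N : ℕ) :
    ∑ k ∈ range N, x ^ (k + 1) ≤ x / (1 - x) := by
  simpa [sum_Ico_eq_sum_range, add_comm] using
    geom_sum_Ico_le_of_lt_one (m := 1) (n := N + 1) hx0 hx1

theorem pow_succ_div_one_sub_pow_succ_le (hx0 : 0 ≤ x) (hx1 : x < 1) (j : ℕ) :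
    x ^ (j + 1) / (1 - x ^ (j + 1)) ≤ x / ((j + 1) * (1 - x)) := by
  have hpow : x ^ (j + 1) < 1 := pow_lt_one₀ hx0 hx1 j.succ_ne_zero
  rw [div_le_div_iff₀ (by linarith) (mul_pos (by positivity) (by linarith))]
  calc x ^ (j + 1) * ((j + 1) * (1 - x)) = x * ((j + 1) * x ^ j * (1 - x)) := by ring
    _ ≤ x * (1 - x ^ (j + 1)) := by gcongr; exact succ_mul_pow_mul_one_sub_le hx0 hx1.le j

end GeomSum

theorem hasSum_one_div_succ_sq : HasSum (fun j : ℕ => 1 / ((j : ℝ) + 1) ^ 2) (π ^ 2 / 6) := by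
  have h := (hasSum_nat_add_iff (f := fun j : ℕ => 1 / (j : ℝ) ^ 2) 1).2
    (by simpa using hasSum_zeta_two)
  push_cast at h
  exact h

theorem sum_neg_log_one_sub_pow_le {x : ℝ} (hx0 : 0 ≤ x) (hx1 : x < 1) (n : ℕ) :
    ∑ k ∈ range n, -log (1 - x ^ (k + 1)) ≤ π ^ 2 / 6 * (x / (1 - x)) := by
  have hlog : HasSum (fun j : ℕ => ∑ k ∈ range n, (x ^ (k + 1)) ^ (j + 1) / (j + 1))
      (∑ k ∈ range n, -log (1 - x ^ (k + 1))) := by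
    refine hasSum_sum fun k _ => hasSum_pow_div_log_of_abs_lt_one ?_
    rw [abs_of_nonneg (by positivity)]
    exact pow_lt_one₀ hx0 hx1 k.succ_ne_zero
  rw [mul_comm]
  refine hasSum_le (fun j => ?_) hlog (hasSum_one_div_succ_sq.mul_left (x / (1 - x)))
  calc ∑ k ∈ range n, (x ^ (k + 1)) ^ (j + 1) / (j + 1)
      = (∑ k ∈ range n, (x ^ (j + 1)) ^ (k + 1)) / (j + 1) := by
        simp_rw [sum_div, ← pow_mul, mul_comm]
    _ ≤ x ^ (j + 1) / (1 - x ^ (j + 1)) / (j + 1) := by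
        gcongr ?_ / _
        exact sum_range_pow_succ_le (by positivity) (pow_lt_one₀ hx0 hx1 j.succ_ne_zero) n
    _ ≤ x / ((j + 1) * (1 - x)) / (j + 1) := by
        gcongr ?_ / _
        exact pow_succ_div_one_sub_pow_succ_le hx0 hx1 j
    _ = x / (1 - x) * (1 / (j + 1) ^ 2) := by
        field_simp

theorem Real.exp_neg_div_one_sub_exp_neg_le_inv {u : ℝ} (hu : 0 < u) :
    exp (-u) / (1 - exp (-u)) ≤ u⁻¹ := by
  rw [div_le_iff₀ (sub_pos.2 (exp_lt_one_iff.2 (neg_neg_of_pos hu))), le_inv_mul_iff₀ hu]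
  calc u * exp (-u) = exp (-u) * (u + 1) - exp (-u) := by ring
    _ ≤ exp (-u) * exp u - exp (-u) := by gcongr; exact add_one_le_exp u
    _ = 1 - exp (-u) := by rw [← exp_add, neg_add_cancel, exp_zero]

namespace Nat.Partition

variable {n : ℕ}

def multiplicities (p : n.Partition) (i : Fin n) : ℕ := p.parts.count (i.val + 1)

theorem sum_succ_mul_multiplicities (p : n.Partition) :
    ∑ i : Fin n, (i + 1) * p.multiplicities i = n := by
  have hsupp : p.parts.toFinset ⊆ range (n + 1) := fun a ha =>
    mem_range.2 (Nat.lt_succ_of_le (le_of_mem_parts (Multiset.mem_toFinset.1 ha)))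
  calc ∑ i : Fin n, (i + 1) * p.multiplicities i
      = ∑ k ∈ range n, (k + 1) * p.parts.count (k + 1) :=
        Fin.sum_univ_eq_sum_range (fun k => (k + 1) * p.parts.count (k + 1)) n
    _ = ∑ k ∈ range (n + 1), k * p.parts.count k := by simp [sum_range_succ']
    _ = ∑ k ∈ p.parts.toFinset, k * p.parts.count k := by
        refine (sum_subset hsupp fun a _ ha => ?_).symm
        rw [Multiset.count_eq_zero_of_notMem (Multiset.mem_toFinset.not.1 ha), mul_zero]
    _ = p.parts.sum := by simp_rw [sum_multiset_count, smul_eq_mul, mul_comm]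
    _ = n := p.parts_sum

theorem multiplicities_le (p : n.Partition) (i : Fin n) : p.multiplicities i ≤ n :=
  calc p.multiplicities i ≤ (i + 1) * p.multiplicities i := Nat.le_mul_of_pos_left _ i.succ_pos
    _ ≤ ∑ i : Fin n, (i + 1) * p.multiplicities i :=
        single_le_sum (f := fun i : Fin n => (i + 1) * p.multiplicities i)
          (fun _ _ => Nat.zero_le _) (mem_univ i)
    _ = n := p.sum_succ_mul_multiplicities

theorem multiplicities_injective : Function.Injective (multiplicities (n := n)) := by
  intro p q h
  ext a
  rcases Nat.eq_zero_or_pos a with rfl | ha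
  · rw [Multiset.count_eq_zero_of_notMem fun h => (p.parts_pos h).false,
      Multiset.count_eq_zero_of_notMem fun h => (q.parts_pos h).false]
  rcases le_or_gt a n with han | han
  · simpa [multiplicities, Nat.sub_add_cancel ha] using congr_fun h ⟨a - 1, by omega⟩
  · rw [Multiset.count_eq_zero_of_notMem fun h => (le_of_mem_parts h).not_gt han,
      Multiset.count_eq_zero_of_notMem fun h => (le_of_mem_parts h).not_gt han]

theorem card_mul_pow_le_prod_sum_pow {R : Type*} [CommSemiring R] [PartialOrder R]
    [IsOrderedRing R] {x : R} (hx : 0 ≤ x) :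
    (Nat.card n.Partition : R) * x ^ n ≤
      ∏ i : Fin n, ∑ j ∈ range (n + 1), (x ^ ((i : ℕ) + 1)) ^ j := by
  classical
  have hterm (p : n.Partition) :
      x ^ n = ∏ i : Fin n, (x ^ ((i : ℕ) + 1)) ^ p.multiplicities i := by
    simp_rw [← pow_mul, prod_pow_eq_pow_sum, sum_succ_mul_multiplicities]
  have hsub : univ.image multiplicities ⊆ Fintype.piFinset fun _ : Fin n => range (n + 1) := by
    simp only [subset_iff, mem_image, Fintype.mem_piFinset, mem_range]
    rintro _ ⟨p, -, rfl⟩ i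
    exact Nat.lt_succ_of_le (p.multiplicities_le i)
  calc (Nat.card n.Partition : R) * x ^ n
      = ∑ p : n.Partition, ∏ i : Fin n, (x ^ ((i : ℕ) + 1)) ^ p.multiplicities i := by
        simp [← hterm, Nat.card_eq_fintype_card]
    _ = ∑ f ∈ univ.image multiplicities, ∏ i : Fin n, (x ^ ((i : ℕ) + 1)) ^ f i :=
        (sum_image (f := fun f => ∏ i : Fin n, (x ^ ((i : ℕ) + 1)) ^ f i)
          fun _ _ _ _ h => multiplicities_injective h).symm
    _ ≤ ∑ f ∈ Fintype.piFinset fun _ : Fin n => range (n + 1),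
          ∏ i : Fin n, (x ^ ((i : ℕ) + 1)) ^ f i :=
        sum_le_sum_of_subset_of_nonneg hsub fun _ _ _ => by positivity
    _ = ∏ i : Fin n, ∑ j ∈ range (n + 1), (x ^ ((i : ℕ) + 1)) ^ j := sum_prod_piFinset _ _

theorem card_mul_pow_le_exp {x : ℝ} (hx0 : 0 ≤ x) (hx1 : x < 1) (n : ℕ) :
    (Nat.card n.Partition : ℝ) * x ^ n ≤ exp (π ^ 2 / 6 * (x / (1 - x))) := by
  have hpow (k : ℕ) : x ^ (k + 1) < 1 := pow_lt_one₀ hx0 hx1 k.succ_ne_zero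
  calc (Nat.card n.Partition : ℝ) * x ^ n
      ≤ ∏ i : Fin n, ∑ j ∈ range (n + 1), (x ^ ((i : ℕ) + 1)) ^ j :=
        card_mul_pow_le_prod_sum_pow hx0
    _ ≤ ∏ i : Fin n, (1 - x ^ ((i : ℕ) + 1))⁻¹ :=
        prod_le_prod (fun _ _ => by positivity) fun i _ =>
          geom_sum_le_inv_one_sub (by positivity) (hpow i) _
    _ = exp (∑ k ∈ range n, -Real.log (1 - x ^ (k + 1))) := by
        rw [exp_sum, ← Fin.prod_univ_eq_prod_range (fun k => exp (-Real.log (1 - x ^ (k + 1))))]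
        exact prod_congr rfl fun i _ => by rw [exp_neg, exp_log (sub_pos.2 (hpow i))]
    _ ≤ exp (π ^ 2 / 6 * (x / (1 - x))) := exp_le_exp.2 (sum_neg_log_one_sub_pow_le hx0 hx1 n)

theorem card_le_exp (n : ℕ) {u : ℝ} (hu : 0 < u) :
    (Nat.card n.Partition : ℝ) ≤ exp (π ^ 2 / (6 * u) + n * u) := by
  have hx1 : exp (-u) < 1 := exp_lt_one_iff.2 (neg_neg_of_pos hu)
  calc (Nat.card n.Partition : ℝ)
      = Nat.card n.Partition * exp (-u) ^ n * exp (n * u) := by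
        rw [mul_assoc, ← exp_nat_mul, ← exp_add, mul_neg, neg_add_cancel, exp_zero, mul_one]
    _ ≤ exp (π ^ 2 / 6 * (exp (-u) / (1 - exp (-u)))) * exp (n * u) := by
        gcongr
        exact card_mul_pow_le_exp (exp_pos _).le hx1 n
    _ ≤ exp (π ^ 2 / 6 * u⁻¹) * exp (n * u) := by
        gcongr
        exact exp_neg_div_one_sub_exp_neg_le_inv hu
    _ = exp (π ^ 2 / (6 * u) + n * u) := by
        rw [← exp_add]
        congr 1
        ring

end Nat.Partition

theorem partition_upper_bound (n : ℕ) (hn : 1 ≤ n) :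
    (Nat.card (Nat.Partition n) : ℝ) ≤ Real.exp (Real.pi * Real.sqrt (2 * n / 3)) := by
  set s := √(2 * n / 3) with hs_def
  have hn_pos : (0 : ℝ) < n := by exact_mod_cast hn
  have hs : 0 < s := sqrt_pos.2 (by positivity)
  have hn_eq : (n : ℝ) = 3 / 2 * s ^ 2 := by rw [hs_def, sq_sqrt (by positivity)]; ring
  -- `π / (3 * s) = π / √(6n)`
  calc (Nat.card n.Partition : ℝ)
      ≤ exp (π ^ 2 / (6 * (π / (3 * s))) + n * (π / (3 * s))) :=
        Nat.Partition.card_le_exp n (by positivity)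
    _ = exp (π * s) := by
        rw [hn_eq]
        congr 1
        field_simp
        ring
end

section
/- For α = (α₁,…,α_r) ∈ (ℤ_{≥1})^r, the number p(α) of multisets of nonzero vectors in (ℤ_{≥0})^r summing to α satisfies p(α) ≥ (1/e) Σ_{k=0}^∞ (1/(k+1)!) ∏_{i=1}^r C(k+α_i, k). -/
/-!
The product `∏ i, C(k + α i, k)` counts the `(k + 1)`-tuples of vectors in `ℕ^r` summing to `α`.
Sorting such a tuple by its multiset of nonzero entries, which is a vector partition `s` of `α`,
each `s` arises from at most `(k + 1)(k) ⋯ (k + 2 - #s)` tuples. Dividing by `(k + 1)!` and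
summing over `k`, the contribution of a fixed `s` is at most `∑ i, 1 / i! = e`.
-/

/-- The number of multisets of nonzero vectors in `(ℤ≥0)^r` summing componentwise to `α`. -/
noncomputable def vecPartitions {r : ℕ} (α : Fin r → ℕ) : ℕ :=
  Set.ncard {s : Multiset (Fin r → ℕ) | (∀ β ∈ s, β ≠ 0) ∧ s.sum = α}

open Finset

section NonzeroValues

variable {V : Type*} [Zero V] [DecidableEq V]

def nonzeroValues {l : ℕ} (f : Fin l → V) : Multiset V :=
  (univ.val.map f).filter (· ≠ 0)

lemma mem_nonzeroValues {l : ℕ} {f : Fin l → V} {a : V} :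
    a ∈ nonzeroValues f ↔ a ≠ 0 ∧ ∃ j, f j = a := by
  simp [nonzeroValues, and_comm]

lemma eq_zero_of_nonzeroValues_eq_zero {l : ℕ} {f : Fin l → V} (h : nonzeroValues f = 0) :
    f = 0 := by
  funext j
  by_contra hj
  simpa [h] using mem_nonzeroValues.2 ⟨hj, j, rfl⟩

lemma nonzeroValues_eq_cons_removeNth {n : ℕ} (f : Fin (n + 1) → V) (j : Fin (n + 1))
    (h : f j ≠ 0) : nonzeroValues f = f j ::ₘ nonzeroValues (j.removeNth f) := by
  have hmap : univ.val.map f = f j ::ₘ univ.val.map (j.removeNth f) := by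
    rw [Fin.univ_succAbove n j, Finset.cons_val, Multiset.map_cons, Finset.map_val,
      Multiset.map_map]
    rfl
  rw [nonzeroValues, hmap, Multiset.filter_cons_of_pos (p := (· ≠ 0)) _ h]
  rfl

/-- Every tuple in the fiber of `a ::ₘ s` is obtained by inserting `a` into a tuple, one entry
shorter, in the fiber of `s`. -/
theorem encard_nonzeroValues_fiber_le (s : Multiset V) (l : ℕ) :
    {f : Fin l → V | nonzeroValues f = s}.encard ≤ l.descFactorial (Multiset.card s) := by
  induction s using Multiset.induction_on generalizing l with
  | empty =>
    calc {f : Fin l → V | nonzeroValues f = 0}.encard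
        ≤ ({0} : Set (Fin l → V)).encard :=
          Set.encard_le_encard fun f hf => eq_zero_of_nonzeroValues_eq_zero hf
      _ = l.descFactorial (Multiset.card (0 : Multiset V)) := by simp
  | cons a s ih =>
    have hmem : ∀ {l} {f : Fin l → V}, nonzeroValues f = a ::ₘ s → a ≠ 0 ∧ ∃ j, f j = a :=
      fun hf => mem_nonzeroValues.1 (hf ▸ Multiset.mem_cons_self a s)
    cases l with
    | zero =>
      have : {f : Fin 0 → V | nonzeroValues f = a ::ₘ s} = ∅ :=
        Set.eq_empty_of_forall_notMem fun f hf => (hmem hf).2.choose.elim0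
      simp [this]
    | succ n =>
      have hsub : {f : Fin (n + 1) → V | nonzeroValues f = a ::ₘ s} ⊆
          (fun p : Fin (n + 1) × (Fin n → V) => p.1.insertNth a p.2) ''
            (Set.univ ×ˢ {g | nonzeroValues g = s}) := by
        intro f hf
        obtain ⟨ha, j, rfl⟩ := hmem hf
        refine ⟨(j, j.removeNth f), ⟨trivial, ?_⟩, Fin.insertNth_self_removeNth j f⟩
        rw [Set.mem_ofPred_eq, nonzeroValues_eq_cons_removeNth f j ha] at hf
        exact (Multiset.cons_inj_right _).1 hf
      calc _ ≤ _ := Set.encard_le_encard hsub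
        _ ≤ _ := Set.encard_image_le _ _
        _ = (n + 1) * {g : Fin n → V | nonzeroValues g = s}.encard := by
          simp [Set.encard_prod, Set.encard_univ]
        _ ≤ (n + 1) * n.descFactorial (Multiset.card s) := by gcongr; exact ih n
        _ = (n + 1).descFactorial (Multiset.card (a ::ₘ s)) := by
          rw [Multiset.card_cons, Nat.succ_descFactorial_succ]; push_cast; rfl

end NonzeroValues

lemma sum_nonzeroValues {V : Type*} [AddCommMonoid V] [DecidableEq V] {l : ℕ} (f : Fin l → V) :
    (nonzeroValues f).sum = ∑ j, f j := by
  rw [nonzeroValues, Multiset.filter_map, ← Finset.sum_filter_ne_zero]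
  rfl

section VecPartitionSet

variable {ι : Type*} [Fintype ι]

def vecPartitionSet (α : ι → ℕ) : Set (Multiset (ι → ℕ)) :=
  {s | (∀ β ∈ s, β ≠ 0) ∧ s.sum = α}

lemma card_le_sum_of_mem_vecPartitionSet {α : ι → ℕ} {s : Multiset (ι → ℕ)}
    (hs : s ∈ vecPartitionSet α) : Multiset.card s ≤ ∑ i, α i := by
  obtain ⟨hne, rfl⟩ := hs
  have hdeg : ∀ β ∈ s, 1 ≤ ∑ i, β i := fun β hβ =>
    Nat.one_le_iff_ne_zero.2 fun h => hne β hβ (funext (Finset.sum_eq_zero_iff.1 h · (mem_univ _)))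
  calc Multiset.card s ≤ (s.map fun β => ∑ i, β i).sum := by
        simpa using Multiset.card_nsmul_le_sum (s := s.map fun β => ∑ i, β i) (a := 1)
          (by simpa using hdeg)
    _ = ∑ i, s.sum i := by
        rw [Multiset.sum_map_sum]
        simp only [Pi.multiset_sum_apply]

/-- Every part lies in the box `β ≤ α` and occurs at most `∑ i, α i` times. -/
lemma vecPartitionSet_finite (α : ι → ℕ) : (vecPartitionSet α).Finite := by
  classical
  let box : Multiset (ι → ℕ) := (∑ i, α i) • (Finset.Iic α).val
  refine (Multiset.finite_toSet box.powerset).subset fun s hs => ?_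
  refine Multiset.mem_powerset.2 (Multiset.le_iff_count.2 fun β => ?_)
  by_cases hβ : β ∈ s
  · have hβα : β ∈ Finset.Iic α := Finset.mem_Iic.2 (hs.2 ▸ Multiset.le_sum_of_mem hβ)
    calc Multiset.count β s ≤ Multiset.card s := Multiset.count_le_card β s
      _ ≤ ∑ i, α i := card_le_sum_of_mem_vecPartitionSet hs
      _ = Multiset.count β box := by
        rw [Multiset.count_nsmul, Multiset.count_eq_one_of_mem (Finset.nodup _) hβα, mul_one]
  · simp [Multiset.count_eq_zero_of_notMem hβ]

lemma nonzeroValues_mem_vecPartitionSet {α : ι → ℕ} {l : ℕ} {f : Fin l → ι → ℕ}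
    (hf : ∑ j, f j = α) : nonzeroValues f ∈ vecPartitionSet α :=
  ⟨fun _ hβ => (mem_nonzeroValues.1 hβ).1, (sum_nonzeroValues f).trans hf⟩

noncomputable def sumEqEquivPiSym (κ : Type*) [Fintype κ] [DecidableEq κ] (α : ι → ℕ) :
    {f : κ → ι → ℕ // ∑ j, f j = α} ≃ ∀ i, Sym κ (α i) :=
  ((Equiv.piComm _).subtypeEquiv fun f => by simp [funext_iff, Finset.sum_apply]).trans <|
    Equiv.subtypePiEquivPi.trans <|
      Equiv.piCongrRight fun i => (Sym.equivNatSumOfFintype κ (α i)).symm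

/-- Stars and bars, coordinatewise. -/
lemma encard_setOf_sum_eq (κ : Type*) [Fintype κ] (α : ι → ℕ) :
    {f : κ → ι → ℕ | ∑ j, f j = α}.encard
      = (∏ i, (Fintype.card κ + α i - 1).choose (α i) : ℕ) := by
  classical
  refine (ENat.card_congr (sumEqEquivPiSym κ α)).trans ?_
  rw [ENat.card_eq_coe_natCard, Nat.card_pi]
  simp [Nat.card_eq_fintype_card, Sym.card_sym_eq_choose]

theorem prod_choose_le_sum_descFactorial (α : ι → ℕ) (k : ℕ) :
    ∏ i, (k + α i).choose k
      ≤ ∑ s ∈ (vecPartitionSet_finite α).toFinset, (k + 1).descFactorial (Multiset.card s) := by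
  classical
  have hsub : {f : Fin (k + 1) → ι → ℕ | ∑ j, f j = α} ⊆
      ⋃ s ∈ (vecPartitionSet_finite α).toFinset, {f | nonzeroValues f = s} := fun f hf =>
    Set.mem_biUnion ((Set.Finite.mem_toFinset _).2 (nonzeroValues_mem_vecPartitionSet hf)) rfl
  have h := (Set.encard_le_encard hsub).trans (Finset.set_encard_biUnion_le _ _)
  rw [encard_setOf_sum_eq] at h
  have h' := h.trans (Finset.sum_le_sum fun s _ => encard_nonzeroValues_fiber_le s (k + 1))
  norm_cast at h'
  convert h' using 2 with i
  rw [Fintype.card_fin, Nat.add_right_comm, Nat.add_sub_cancel, Nat.choose_symm_add]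

end VecPartitionSet

/-- Only the terms `j = m + i` survive, and they equal `1 / i!`. -/
lemma sum_range_descFactorial_div_factorial_le_exp (m N : ℕ) :
    ∑ j ∈ range N, (j.descFactorial m : ℝ) / j.factorial ≤ Real.exp 1 := by
  have hshift : ∀ i, ((m + i).descFactorial m : ℝ) / (m + i).factorial = 1 / i.factorial := by
    intro i
    have h := Nat.factorial_mul_descFactorial (Nat.le_add_right m i)
    rw [Nat.add_sub_cancel_left] at h
    rw [div_eq_div_iff (by positivity) (by positivity), ← h]
    push_cast
    ring
  calc ∑ j ∈ range N, (j.descFactorial m : ℝ) / j.factorial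
      ≤ ∑ j ∈ range (m + N), (j.descFactorial m : ℝ) / j.factorial :=
        sum_le_sum_of_subset_of_nonneg (range_mono (Nat.le_add_left N m))
          fun _ _ _ => by positivity
    _ = ∑ i ∈ range N, 1 / (i.factorial : ℝ) := by
        rw [sum_range_add, sum_eq_zero fun j hj => by
          rw [Nat.descFactorial_eq_zero_iff_lt.2 (mem_range.1 hj), Nat.cast_zero, zero_div]]
        simp only [hshift, zero_add]
    _ ≤ Real.exp 1 := by simpa using Real.sum_le_exp_of_nonneg zero_le_one N

lemma sum_range_le_exp_mul_vecPartitions {r : ℕ} (α : Fin r → ℕ) (n : ℕ) :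
    ∑ k ∈ range n, (1 / ((k + 1).factorial : ℝ)) * ∏ i, ((k + α i).choose k : ℝ)
      ≤ Real.exp 1 * vecPartitions α := by
  set P := (vecPartitionSet_finite α).toFinset
  have hterm : ∀ k, (1 / ((k + 1).factorial : ℝ)) * ∏ i, ((k + α i).choose k : ℝ)
      ≤ ∑ s ∈ P, ((k + 1).descFactorial (Multiset.card s) : ℝ) / (k + 1).factorial := by
    intro k
    rw [← sum_div, one_div_mul_eq_div]
    gcongr
    exact_mod_cast prod_choose_le_sum_descFactorial α k
  calc _ ≤ ∑ k ∈ range n, ∑ s ∈ P,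
          ((k + 1).descFactorial (Multiset.card s) : ℝ) / (k + 1).factorial :=
        sum_le_sum fun k _ => hterm k
    _ = ∑ s ∈ P, ∑ k ∈ range n,
          ((k + 1).descFactorial (Multiset.card s) : ℝ) / (k + 1).factorial := sum_comm
    _ ≤ ∑ s ∈ P, Real.exp 1 := sum_le_sum fun s _ => by
        have h := sum_range_descFactorial_div_factorial_le_exp (Multiset.card s) (n + 1)
        rw [sum_range_succ'] at h
        exact le_of_add_le_of_nonneg_left h (by positivity)
    _ = Real.exp 1 * vecPartitions α := by
        rw [sum_const, nsmul_eq_mul, mul_comm,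
          ← Set.ncard_eq_toFinset_card _ (vecPartitionSet_finite α)]
        rfl

theorem vecPartitions_lower_bound_general (r : ℕ) (α : Fin r → ℕ) :
    (1 / Real.exp 1) *
        ∑' k : ℕ, (1 / ((k + 1).factorial : ℝ)) * ∏ i, ((k + α i).choose k : ℝ)
      ≤ (vecPartitions α : ℝ) := by
  have hsum := Real.tsum_le_of_sum_range_le (fun k => by positivity)
    (sum_range_le_exp_mul_vecPartitions α)
  rw [one_div_mul_eq_div, div_le_iff₀ (Real.exp_pos 1), mul_comm]
  exact hsum

theorem vecPartitions_lower_bound (r : ℕ) (hr : 1 ≤ r) (α : Fin r → ℕ)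
    (hα : ∀ i, 1 ≤ α i) :
    (1 / Real.exp 1) *
        ∑' k : ℕ, (1 / ((k + 1).factorial : ℝ)) * ∏ i, ((k + α i).choose k : ℝ)
      ≤ (vecPartitions α : ℝ) :=
  vecPartitions_lower_bound_general r α
end

section
/- For r ≥ 1, the r-th Bell number satisfies Dobiński's formula: B_r = (1/e) Σ_{k=0}^∞ k^r / k!. -/
/-!
Deleting the block of a point `a` from a partition of `insert a s` leaves an arbitrary partition
of `s \ u`, where `u ⊆ s` is the rest of that block; hence `B (n + 1) = ∑ i, C(n, i) B (n - i)`.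
The sums `T n = ∑' k, k ^ n / k!` obey the same recurrence, because
`(k + 1) ^ (n + 1) / (k + 1)! = (1 + k) ^ n / k!` expands binomially, and `T 0 = e`.
So `T n = e B n`.
-/

/-- The `r`-th Bell number: the number of partitions of an `r`-element set. -/
noncomputable def bell (r : ℕ) : ℕ :=
  Nat.card (Finpartition (Finset.univ : Finset (Fin r)))

open Finset
open scoped Nat

namespace Finpartition

theorem parts_avoid_of_mem {β : Type*} [GeneralizedBooleanAlgebra β] [DecidableEq β] {a b : β}
    (P : Finpartition a) (hb : b ∈ P.parts) : (P.avoid b).parts = P.parts.erase b := by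
  ext c
  rw [mem_avoid, mem_erase]
  constructor
  · rintro ⟨d, hd, hdb, rfl⟩
    have hne : d ≠ b := by rintro rfl; exact hdb le_rfl
    have hdisj : Disjoint d b := P.disjoint hd hb hne
    rw [hdisj.sdiff_eq_left]
    exact ⟨hne, hd⟩
  · rintro ⟨hne, hc⟩
    have hdisj : Disjoint c b := P.disjoint hc hb hne
    exact ⟨c, hc, fun hcb => P.ne_bot hc (hdisj.eq_bot_of_le hcb), hdisj.sdiff_eq_left⟩

variable {α : Type*} [DecidableEq α] {a : α} {s u : Finset α}

def equivPartEqInsert (ha : a ∉ s) (hu : u ⊆ s) :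
    {P : Finpartition (insert a s) // P.part a = insert a u} ≃ Finpartition (s \ u) where
  toFun P := (P.1.avoid (P.1.part a)).copy <| by
    rw [P.2, insert_sdiff_insert, sdiff_insert_of_notMem ha]
  invFun Q :=
    have hdisj : Disjoint (s \ u) (insert a u) :=
      disjoint_insert_right.2 ⟨fun h => ha (mem_sdiff.1 h).1, sdiff_disjoint⟩
    have hunion : s \ u ⊔ insert a u = insert a s := by
      rw [sup_eq_union, union_insert, sdiff_union_of_subset hu]
    ⟨Q.extend (insert_ne_empty a u) hdisj hunion,
      part_eq_of_mem _ (mem_insert_self _ _) (mem_insert_self a u)⟩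
  left_inv P := by
    obtain ⟨P, hP⟩ := P
    have hmem : P.part a ∈ P.parts := P.part_mem.2 (mem_insert_self a s)
    refine Subtype.ext (Finpartition.ext ?_)
    change insert (insert a u) (P.avoid (P.part a)).parts = P.parts
    rw [parts_avoid_of_mem _ hmem, ← hP, insert_erase hmem]
  right_inv Q := by
    have hnot : insert a u ∉ Q.parts := fun h =>
      ha (mem_sdiff.1 (Q.le h (mem_insert_self a u))).1
    have key (R : Finpartition (insert a s)) (hR : R.parts = insert (insert a u) Q.parts) :
        (R.avoid (R.part a)).parts = Q.parts := by
      have hmem : insert a u ∈ R.parts := hR ▸ mem_insert_self _ _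
      rw [R.part_eq_of_mem hmem (mem_insert_self a u), parts_avoid_of_mem _ hmem, hR,
        erase_insert hnot]
    exact Finpartition.ext (key _ rfl)

theorem natCard_insert_eq_sum (ha : a ∉ s) :
    Nat.card (Finpartition (insert a s)) =
      ∑ u ∈ s.powerset, Nat.card (Finpartition (s \ u)) := by
  have hmaps : ((univ : Finset (Finpartition (insert a s))) : Set _).MapsTo
      (fun P : Finpartition _ => (P.part a).erase a) (s.powerset : Set (Finset α)) :=
    fun P _ => by
      rw [mem_coe, mem_powerset, ← insert_subset_insert_iff (notMem_erase a _),
        insert_erase (P.mem_part_self.2 (mem_insert_self a s))]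
      exact P.part_subset a
  rw [Nat.card_eq_fintype_card, ← card_univ, card_eq_sum_card_fiberwise hmaps]
  refine sum_congr rfl fun u hu => ?_
  have hus : u ⊆ s := mem_powerset.1 hu
  rw [← Nat.card_congr (equivPartEqInsert ha hus), ← Fintype.card_subtype,
    ← Nat.card_eq_fintype_card]
  refine Nat.card_congr (Equiv.subtypeEquivRight fun P => ?_)
  exact erase_eq_iff_eq_insert (P.mem_part_self.2 (mem_insert_self a s)) fun h => ha (hus h)

theorem natCard_eq_bell (s : Finset α) : Nat.card (Finpartition s) = Nat.bell #s := by
  induction h : #s using Nat.strong_induction_on generalizing s with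
  | _ n ih =>
  rcases n with _ | n
  · rw [card_eq_zero.1 h, ← bot_eq_empty, Nat.card_unique, Nat.bell_zero]
  obtain ⟨a, ha⟩ : s.Nonempty := card_pos.1 (by omega)
  have hcard : #(s.erase a) = n := by rw [card_erase_of_mem ha, h]; rfl
  have hsub (u) (hu : u ∈ (s.erase a).powerset) :
      Nat.card (Finpartition (s.erase a \ u)) = Nat.bell (n - #u) :=
    ih (n - #u) (by omega) _ (by rw [card_sdiff_of_subset (mem_powerset.1 hu), hcard])
  rw [← insert_erase ha, natCard_insert_eq_sum (notMem_erase a s), sum_congr rfl hsub,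
    sum_powerset_apply_card (fun m => Nat.bell (n - m)), hcard, Nat.bell_succ,
    Nat.range_succ_eq_Iic]
  simp only [smul_eq_mul]

end Finpartition

theorem natCast_add_one_pow_succ_div_factorial (n k : ℕ) :
    ((k + 1 : ℕ) : ℝ) ^ (n + 1) / (k + 1)! =
      ∑ i ∈ range (n + 1), n.choose i * ((k : ℝ) ^ (n - i) / k !) := by
  rw [Nat.factorial_succ, Nat.cast_mul, pow_succ, mul_comm (_ ^ n),
    mul_div_mul_left _ _ (by positivity), Nat.cast_add_one, add_comm, add_pow, sum_div]
  refine sum_congr rfl fun i _ => ?_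
  rw [one_pow, one_mul, mul_comm, mul_div_assoc]

theorem summable_natCast_pow_div_factorial (n : ℕ) :
    Summable fun k : ℕ => (k : ℝ) ^ n / k ! := by
  induction n using Nat.strong_induction_on with
  | _ n ih =>
  rcases n with _ | n
  · simpa using Real.summable_pow_div_factorial 1
  rw [← summable_nat_add_iff 1]
  simp_rw [natCast_add_one_pow_succ_div_factorial]
  exact summable_sum fun i _ => (ih (n - i) (by omega)).mul_left _

theorem tsum_natCast_pow_succ_div_factorial (n : ℕ) :
    ∑' k : ℕ, (k : ℝ) ^ (n + 1) / k ! =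
      ∑ i ∈ range (n + 1), n.choose i * ∑' k : ℕ, (k : ℝ) ^ (n - i) / k ! := by
  rw [(summable_natCast_pow_div_factorial _).tsum_eq_zero_add]
  simp_rw [natCast_add_one_pow_succ_div_factorial]
  rw [Summable.tsum_finsetSum fun i _ => (summable_natCast_pow_div_factorial _).mul_left _]
  simp [tsum_mul_left]

theorem tsum_natCast_pow_zero_div_factorial :
    ∑' k : ℕ, (k : ℝ) ^ 0 / k ! = Real.exp 1 := by
  simpa [Real.exp_eq_exp_ℝ] using (NormedSpace.expSeries_div_hasSum_exp (1 : ℝ)).tsum_eq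

theorem Nat.bell_mul_exp_one (n : ℕ) :
    (Nat.bell n : ℝ) * Real.exp 1 = ∑' k : ℕ, (k : ℝ) ^ n / k ! := by
  induction n using Nat.strong_induction_on with
  | _ n ih =>
  rcases n with _ | n
  · rw [Nat.bell_zero, Nat.cast_one, one_mul, tsum_natCast_pow_zero_div_factorial]
  rw [tsum_natCast_pow_succ_div_factorial, Nat.bell_succ, ← Nat.range_succ_eq_Iic]
  push_cast
  rw [sum_mul]
  refine sum_congr rfl fun i _ => ?_
  rw [mul_assoc, ih (n - i) (by omega)]

theorem dobinski_general (r : ℕ) :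
    (bell r : ℝ) = (1 / Real.exp 1) * ∑' k : ℕ, (k : ℝ) ^ r / (k.factorial : ℝ) := by
  have hbell : bell r = Nat.bell r := by
    rw [bell, Finpartition.natCard_eq_bell, card_univ, Fintype.card_fin]
  rw [hbell, ← Nat.bell_mul_exp_one]
  field_simp

theorem dobinski (r : ℕ) (hr : 1 ≤ r) :
    (bell r : ℝ) = (1 / Real.exp 1) * ∑' k : ℕ, (k : ℝ) ^ r / (k.factorial : ℝ) :=
  dobinski_general r
end

section
/- Let α = (α₁,…,α_r) with α_i ≥ 1, and let N ≥ 1 be an integer such that N ≤ ∏_{i=1}^r (1 + α_i/(N)) (equivalently g(α,N) ≤ 1). Then p(α) ≥ (e^{N-2}/(2 N^{3/2})) · ∏_{i=1}^r (1/(2√(2N))) (1 + N/α_i)^{α_i + 1/2}. -/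
open Finset Real
open scoped Nat

theorem Multiset.injOn_filter_ne {β : Type*} [DecidableEq β] (a : β) (n : ℕ) :
    Set.InjOn (Multiset.filter (· ≠ a)) {m | Multiset.card m = n} := by
  have card_eq (m : Multiset β) : Multiset.card (m.filter (· ≠ a)) + m.count a = m.card := by
    conv_rhs => rw [← Multiset.filter_add_not (· ≠ a) m]
    simp [Multiset.filter_eq']
  intro m₁ h₁ m₂ h₂ h
  ext b
  by_cases hb : b = a
  · subst hb
    have e₁ := card_eq m₁
    have e₂ := card_eq m₂
    rw [h, show m₁.card = n from h₁] at e₁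
    rw [show m₂.card = n from h₂] at e₂
    omega
  · simpa only [Multiset.count_filter_of_pos (p := fun x => x ≠ a) hb]
      using congrArg (Multiset.count b) h

theorem Multiset.sum_filter_ne_zero {M : Type*} [AddCommMonoid M] [DecidableEq M]
    (s : Multiset M) : (s.filter (· ≠ 0)).sum = s.sum := by
  conv_rhs => rw [← Multiset.filter_add_not (· ≠ 0) s]
  have hzero : (s.filter fun x => ¬x ≠ 0).sum = 0 :=
    Multiset.sum_eq_zero fun x hx => not_not.1 (Multiset.mem_filter.1 hx).2
  rw [Multiset.sum_add, hzero, add_zero]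

theorem Tuple.comp_sort_eq_of_map_univ_eq {β : Type*} [LinearOrder β] {n : ℕ} {f g : Fin n → β}
    (h : univ.val.map f = univ.val.map g) : f ∘ Tuple.sort f = g ∘ Tuple.sort g := by
  apply List.ofFn_injective
  refine List.Perm.eq_of_sortedLE (Tuple.monotone_sort f).sortedLE_ofFn
    (Tuple.monotone_sort g).sortedLE_ofFn ?_
  have hfg : (List.ofFn f).Perm (List.ofFn g) := by
    rwa [← Multiset.coe_eq_coe, ← Fin.univ_val_map, ← Fin.univ_val_map]
  exact ((Tuple.sort f).ofFn_comp_perm f).trans (hfg.trans ((Tuple.sort g).ofFn_comp_perm g).symm)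

theorem card_filter_map_univ_eq_le_factorial {β : Type*} [DecidableEq β] {n : ℕ}
    (D : Finset (Fin n → β)) (m : Multiset β) : #{g ∈ D | univ.val.map g = m} ≤ n ! := by
  -- Any linear order on `β` will do: within a fiber, the sorting permutation determines the tuple.
  let _ : LinearOrder β := IsWellOrder.linearOrder WellOrderingRel
  calc #{g ∈ D | univ.val.map g = m} ≤ #(univ : Finset (Equiv.Perm (Fin n))) := by
        refine card_le_card_of_injOn Tuple.sort (fun _ _ => mem_univ _) ?_
        intro g₁ h₁ g₂ h₂ hsort
        have hcomp := Tuple.comp_sort_eq_of_map_univ_eq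
          ((mem_filter.1 h₁).2.trans (mem_filter.1 h₂).2.symm)
        rw [hsort] at hcomp
        exact (Tuple.sort g₂).surjective.injective_comp_right hcomp
    _ = n ! := by rw [Finset.card_univ, Fintype.card_perm, Fintype.card_fin]

theorem Multiset.card_le_sum_sum_apply_of_ne_zero {ι : Type*} [Fintype ι]
    {s : Multiset (ι → ℕ)} (hs : ∀ β ∈ s, β ≠ 0) : Multiset.card s ≤ ∑ i, s.sum i := by
  have hpos : ∀ n ∈ s.map (fun β => ∑ i, β i), 1 ≤ n := by
    simp only [Multiset.mem_map, forall_exists_index, and_imp, forall_apply_eq_imp_iff₂]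
    intro β hβ
    by_contra! h
    exact hs β hβ (funext fun i => Finset.sum_eq_zero_iff.1 (Nat.lt_one_iff.1 h) i (mem_univ i))
  simpa [Multiset.sum_map_sum, Pi.multiset_sum_apply] using Multiset.card_nsmul_le_sum hpos

theorem finite_setOf_forall_ne_zero_sum_eq {ι : Type*} [Fintype ι] [DecidableEq ι]
    (α : ι → ℕ) : {s : Multiset (ι → ℕ) | (∀ β ∈ s, β ≠ 0) ∧ s.sum = α}.Finite := by
  refine (Set.finite_Iic ((∑ i, α i) • (Iic α).val)).subset ?_
  rintro s ⟨hs, rfl⟩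
  rw [Set.mem_Iic, Multiset.le_iff_count]
  intro β
  by_cases hβ : β ∈ s
  · rw [Multiset.count_nsmul, Multiset.count_eq_one_of_mem (Iic _).nodup
      (mem_Iic.2 (Multiset.le_sum_of_mem hβ)), mul_one]
    exact (Multiset.count_le_card β s).trans (Multiset.card_le_sum_sum_apply_of_ne_zero hs)
  · simp [Multiset.count_eq_zero_of_notMem hβ]

theorem card_le_factorial_mul_card_image_map_univ {β : Type*} [DecidableEq β] {n : ℕ}
    (D : Finset (Fin n → β)) : #D ≤ n ! * #(D.image fun g => univ.val.map g) :=
  card_le_mul_card_image D _ fun m _ => card_filter_map_univ_eq_le_factorial D m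

theorem prod_multichoose_le_factorial_mul_vecPartitions {r : ℕ} (α : Fin r → ℕ) (M : ℕ) :
    ∏ i, M.multichoose (α i) ≤ M ! * vecPartitions α := by
  classical
  let toTuple (σ : ∀ i, Sym (Fin M) (α i)) : Fin M → Fin r → ℕ :=
    fun j i => (σ i : Multiset (Fin M)).count j
  have toTuple_injective : Function.Injective toTuple := fun σ τ h =>
    funext fun i => Sym.coe_injective <| Multiset.ext.2 fun j => congrFun (congrFun h j) i
  have sum_toTuple (σ) : (univ.val.map (toTuple σ)).sum = α := by
    funext i
    change (∑ j, toTuple σ j) i = α i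
    rw [Finset.sum_apply, Multiset.sum_count_eq_card fun j _ => mem_univ j]
    exact (σ i).2
  set D := univ.image toTuple
  calc ∏ i, M.multichoose (α i) = #D := by
        simp [D, card_image_of_injective _ toTuple_injective, Sym.card_sym_eq_multichoose]
    _ ≤ M ! * #(D.image fun g => univ.val.map g) := card_le_factorial_mul_card_image_map_univ D
    _ ≤ M ! * vecPartitions α := by
        refine Nat.mul_le_mul_left _ ?_
        rw [vecPartitions, ← Set.ncard_coe_finset]
        refine Set.ncard_le_ncard_of_injOn (Multiset.filter (· ≠ 0)) ?_
          ((Multiset.injOn_filter_ne 0 M).mono ?_) (finite_setOf_forall_ne_zero_sum_eq α)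
        · intro m hm
          obtain ⟨_, hg, rfl⟩ := mem_image.1 (mem_coe.1 hm)
          obtain ⟨σ, -, rfl⟩ := mem_image.1 hg
          refine ⟨fun β hβ => (Multiset.mem_filter.1 hβ).2, ?_⟩
          rw [Multiset.sum_filter_ne_zero, sum_toTuple]
        · intro m hm
          obtain ⟨_, -, rfl⟩ := mem_image.1 (mem_coe.1 hm)
          simp

theorem Real.exp_one_pow_four_le : exp 1 ^ 4 ≤ 32 * √π := by
  have h1 : exp 1 ≤ 2.7182818286 := exp_one_lt_d9.le
  have h2 : (1.772 : ℝ) ≤ √π := by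
    rw [show (1.772 : ℝ) = √(1.772 ^ 2) by rw [sqrt_sq]; norm_num]
    exact sqrt_le_sqrt (by nlinarith [pi_gt_d6])
  calc exp 1 ^ 4 ≤ 2.7182818286 ^ 4 := by gcongr
    _ ≤ 32 * 1.772 := by norm_num
    _ ≤ 32 * √π := by linarith

namespace Stirling

theorem stirlingSeq_pos {n : ℕ} (hn : n ≠ 0) : 0 < stirlingSeq n := by
  obtain ⟨n, rfl⟩ := Nat.exists_eq_add_one_of_ne_zero hn
  exact stirlingSeq'_pos n

theorem stirlingSeq_le_of_le {m n : ℕ} (hm : m ≠ 0) (hmn : m ≤ n) :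
    stirlingSeq n ≤ stirlingSeq m := by
  obtain ⟨m, rfl⟩ := Nat.exists_eq_succ_of_ne_zero hm
  obtain ⟨n, rfl⟩ := Nat.exists_eq_succ_of_ne_zero (by omega : n ≠ 0)
  exact stirlingSeq'_antitone (Nat.succ_le_succ_iff.1 hmn)

theorem stirlingSeq_two : stirlingSeq 2 = exp 1 ^ 2 / 4 := by
  have h : √(2 * (2 : ℕ) : ℝ) = 2 := by
    rw [show (2 * (2 : ℕ) : ℝ) = 2 ^ 2 by norm_num, sqrt_sq zero_le_two]
  rw [stirlingSeq, h]
  field_simp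
  norm_num [Nat.factorial]

theorem log_stirlingSeq_sdiff_antitone :
    Antitone fun n : ℕ => log (stirlingSeq (n + 1)) - log (stirlingSeq (n + 2)) := by
  intro m n hmn
  refine hasSum_le (fun k => ?_) (log_stirlingSeq_sdiff_hasSum n) (log_stirlingSeq_sdiff_hasSum m)
  gcongr

theorem stirlingSeq_mul_stirlingSeq_two_le {n : ℕ} (hn : n ≠ 0) :
    stirlingSeq n * stirlingSeq 2 ≤ stirlingSeq 1 * stirlingSeq (n + 1) := by
  obtain ⟨n, rfl⟩ := Nat.exists_eq_add_one_of_ne_zero hn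
  have h : log (stirlingSeq (n + 1)) - log (stirlingSeq (n + 2)) ≤
      log (stirlingSeq 1) - log (stirlingSeq 2) := log_stirlingSeq_sdiff_antitone (Nat.zero_le n)
  have hpos (k : ℕ) : 0 < stirlingSeq (k + 1) := stirlingSeq'_pos k
  rw [← log_le_log_iff (mul_pos (hpos n) (hpos 1)) (mul_pos (hpos 0) (hpos (n + 1))),
    log_mul (hpos n).ne' (hpos 1).ne', log_mul (hpos 0).ne' (hpos (n + 1)).ne']
  linarith

theorem stirlingSeq_one_mul_stirlingSeq_le {n : ℕ} (hn : n ≠ 0) :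
    stirlingSeq 1 * stirlingSeq n ≤ 2 * stirlingSeq (n + 1) := by
  have hsq : stirlingSeq 1 * stirlingSeq 1 = 2 * stirlingSeq 2 := by
    rw [stirlingSeq_one, stirlingSeq_two]
    field_simp
    norm_num
  refine le_of_mul_le_mul_right ?_ (stirlingSeq_pos two_ne_zero)
  calc stirlingSeq 1 * stirlingSeq n * stirlingSeq 2
      = stirlingSeq 1 * (stirlingSeq n * stirlingSeq 2) := mul_assoc _ _ _
    _ ≤ stirlingSeq 1 * (stirlingSeq 1 * stirlingSeq (n + 1)) :=
      mul_le_mul_of_nonneg_left (stirlingSeq_mul_stirlingSeq_two_le hn)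
        (stirlingSeq_pos one_ne_zero).le
    _ = 2 * stirlingSeq (n + 1) * stirlingSeq 2 := by rw [← mul_assoc, hsq]; ring

theorem stirlingSeq_mul_stirlingSeq_le {a b : ℕ} (ha : a ≠ 0) (hb : b ≠ 0) :
    stirlingSeq a * stirlingSeq b ≤ 2 * stirlingSeq (a + b) := by
  rcases eq_or_ne a 1 with rfl | ha1
  · rw [add_comm]; exact stirlingSeq_one_mul_stirlingSeq_le hb
  rcases eq_or_ne b 1 with rfl | hb1
  · rw [mul_comm]; exact stirlingSeq_one_mul_stirlingSeq_le ha
  calc stirlingSeq a * stirlingSeq b ≤ stirlingSeq 2 * stirlingSeq 2 :=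
        mul_le_mul (stirlingSeq_le_of_le two_ne_zero (by omega))
          (stirlingSeq_le_of_le two_ne_zero (by omega)) (stirlingSeq_pos hb).le
          (stirlingSeq_pos two_ne_zero).le
    _ ≤ 2 * √π := by rw [stirlingSeq_two]; linarith [exp_one_pow_four_le]
    _ ≤ 2 * stirlingSeq (a + b) := by gcongr; exact sqrt_pi_le_stirlingSeq (by omega)

theorem choose_mul_stirlingSeq_mul_stirlingSeq {a b : ℕ} (ha : a ≠ 0) (hb : b ≠ 0) :
    √(2 * b) * (a + b).choose a * (stirlingSeq a * stirlingSeq b) =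
      (1 + b / a : ℝ) ^ ((a : ℝ) + 1 / 2) * (1 + a / b : ℝ) ^ b * stirlingSeq (a + b) := by
  have hA : (0 : ℝ) < a := by positivity
  have hB : (0 : ℝ) < b := by positivity
  have hba : (1 + b / a : ℝ) = (a + b) / a := by field_simp
  have hab : (1 + a / b : ℝ) = (a + b) / b := by field_simp; ring
  have hsqrt (x : ℝ) : √(2 * x) = √2 * √x := sqrt_mul zero_le_two x
  rw [hba, hab, rpow_add (by positivity), rpow_natCast, ← sqrt_eq_rpow, sqrt_div' _ hA.le,
    Nat.cast_choose ℝ (Nat.le_add_right a b), Nat.add_sub_cancel_left]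
  simp only [stirlingSeq, Nat.cast_add, hsqrt, pow_add, div_pow]
  field_simp

theorem factorial_le_stirlingSeq_one_mul {n : ℕ} (hn : n ≠ 0) :
    (n ! : ℝ) ≤ stirlingSeq 1 * (√(2 * n) * (n / exp 1) ^ n) := by
  rw [← div_le_iff₀ (by positivity)]
  exact stirlingSeq_le_of_le one_ne_zero (Nat.one_le_iff_ne_zero.2 hn)

end Stirling

open Stirling

theorem one_add_div_rpow_mul_one_add_div_pow_le {a b : ℕ} (ha : a ≠ 0) (hb : b ≠ 0) :
    (1 + b / a : ℝ) ^ ((a : ℝ) + 1 / 2) * (1 + a / b : ℝ) ^ b ≤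
      2 * √(2 * b) * (a + b).choose a := by
  refine le_of_mul_le_mul_right ?_ (stirlingSeq_pos (n := a + b) (by omega))
  rw [← choose_mul_stirlingSeq_mul_stirlingSeq ha hb]
  calc √(2 * b) * (a + b).choose a * (stirlingSeq a * stirlingSeq b)
      ≤ √(2 * b) * (a + b).choose a * (2 * stirlingSeq (a + b)) :=
        mul_le_mul_of_nonneg_left (stirlingSeq_mul_stirlingSeq_le ha hb) (by positivity)
    _ = 2 * √(2 * b) * (a + b).choose a * stirlingSeq (a + b) := by ring

theorem exp_sub_two_div_le_pow_div_factorial {n : ℕ} (hn : n ≠ 0) :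
    exp ((n : ℝ) - 2) / (2 * (n : ℝ) ^ ((3 : ℝ) / 2)) ≤ (n : ℝ) ^ n / (n + 1)! := by
  have hpos : (0 : ℝ) < n := by positivity
  have h32 : (n : ℝ) ^ ((3 : ℝ) / 2) = n * √n := by
    rw [show (3 : ℝ) / 2 = 1 + 1 / 2 by norm_num, rpow_add hpos, rpow_one, ← sqrt_eq_rpow]
  have hexp : exp ((n : ℝ) - 2) * exp 1 / exp n = exp (-1) := by
    rw [← exp_add, ← exp_sub]; ring_nf
  rw [div_le_div_iff₀ (by positivity) (by positivity), h32, Nat.factorial_succ, Nat.cast_mul]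
  calc exp ((n : ℝ) - 2) * (((n + 1 : ℕ) : ℝ) * n !)
      ≤ exp ((n : ℝ) - 2) * ((n + 1) * (exp 1 / √2 * (√(2 * n) * (n / exp 1) ^ n))) := by
        push_cast
        gcongr
        simpa using factorial_le_stirlingSeq_one_mul hn
    _ = (n + 1) * exp (-1) * √n * n ^ n := by
        rw [← hexp, sqrt_mul zero_le_two, div_pow, exp_one_pow]
        field_simp
    _ ≤ (2 * n) * 1 * √n * n ^ n := by
        gcongr
        · linarith [(Nat.one_le_cast (α := ℝ)).2 (Nat.one_le_iff_ne_zero.2 hn)]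
        · exact exp_le_one_iff.2 (by norm_num)
    _ = n ^ n * (2 * (n * √n)) := by ring

theorem prod_mul_pow_le_prod_choose {r N : ℕ} (α : Fin r → ℕ) (hα : ∀ i, α i ≠ 0) (hN : N ≠ 0)
    (hgN : (N : ℝ) ≤ ∏ i, (1 + (α i : ℝ) / N)) :
    (∏ i, 1 / (2 * √(2 * N)) * (1 + (N : ℝ) / α i) ^ ((α i : ℝ) + 1 / 2)) * (N : ℝ) ^ N ≤
      ∏ i, ((α i + N).choose (α i) : ℝ) := by
  calc (∏ i, 1 / (2 * √(2 * N)) * (1 + (N : ℝ) / α i) ^ ((α i : ℝ) + 1 / 2)) * (N : ℝ) ^ N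
      ≤ (∏ i, 1 / (2 * √(2 * N)) * (1 + (N : ℝ) / α i) ^ ((α i : ℝ) + 1 / 2)) *
          ∏ i, (1 + (α i : ℝ) / N) ^ N := by
        rw [prod_pow]; gcongr
    _ = ∏ i, (1 + (N : ℝ) / α i) ^ ((α i : ℝ) + 1 / 2) * (1 + (α i : ℝ) / N) ^ N /
          (2 * √(2 * N)) := by
        rw [← prod_mul_distrib]; congr 1 with i; ring
    _ ≤ ∏ i, ((α i + N).choose (α i) : ℝ) := by
        gcongr with i
        rw [div_le_iff₀ (by positivity)]
        linarith [one_add_div_rpow_mul_one_add_div_pow_le (hα i) hN]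

theorem vecPartitions_lower_bound_of_N (r : ℕ) (α : Fin r → ℕ) (hα : ∀ i, 1 ≤ α i)
    (N : ℕ) (hN : 1 ≤ N) (hgN : (N : ℝ) ≤ ∏ i, (1 + (α i : ℝ) / N)) :
    Real.exp ((N : ℝ) - 2) / (2 * (N : ℝ) ^ ((3 : ℝ) / 2)) *
        ∏ i, (1 / (2 * Real.sqrt (2 * N))) *
          (1 + (N : ℝ) / (α i : ℝ)) ^ ((α i : ℝ) + 1 / 2)
      ≤ (vecPartitions α : ℝ) := by
  have hN0 : N ≠ 0 := Nat.one_le_iff_ne_zero.1 hN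
  have hcount : ∏ i, (α i + N).choose (α i) ≤ (N + 1)! * vecPartitions α := by
    convert prod_multichoose_le_factorial_mul_vecPartitions α (N + 1) using 2 with i
    rw [Nat.multichoose_eq]; congr 1; omega
  calc exp ((N : ℝ) - 2) / (2 * (N : ℝ) ^ ((3 : ℝ) / 2)) *
        ∏ i, 1 / (2 * √(2 * N)) * (1 + (N : ℝ) / α i) ^ ((α i : ℝ) + 1 / 2)
      ≤ (N : ℝ) ^ N / (N + 1)! *
          ∏ i, 1 / (2 * √(2 * N)) * (1 + (N : ℝ) / α i) ^ ((α i : ℝ) + 1 / 2) :=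
        mul_le_mul_of_nonneg_right (exp_sub_two_div_le_pow_div_factorial hN0) (by positivity)
    _ ≤ (∏ i, ((α i + N).choose (α i) : ℝ)) / (N + 1)! := by
        rw [div_mul_eq_mul_div, mul_comm]
        gcongr
        exact prod_mul_pow_le_prod_choose α (fun i => Nat.one_le_iff_ne_zero.1 (hα i)) hN0 hgN
    _ ≤ vecPartitions α := by
        rw [div_le_iff₀ (by positivity), mul_comm]
        exact_mod_cast hcount
end

section
/- For α ∈ (ℤ_{≥1})^r, p(α) ≥ (1/e) · ⌈r/2⌉^⌊r/2⌋; consequently, if p(α) ≤ x for sufficiently large x, then r ≤ (2 log x / log log x)(1 + 2 log log log x / log log x). -/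
namespace VecPart

open Filter


variable {r : ℕ}

def unitVec (x : Fin r) : Fin r → ℕ := fun y => if y = x then 1 else 0

def target (f : Fin (r/2) → Fin (r - r/2)) (x : Fin r) : Fin (r - r/2) :=
  if h : (x : ℕ) < r - r/2 then ⟨x, h⟩ else f ⟨(x:ℕ) - (r - r/2), by omega⟩

def fiberVec (f : Fin (r/2) → Fin (r - r/2)) (i : Fin (r - r/2)) : Fin r → ℕ :=
  fun x => if target f x = i then 1 else 0

def Fm (α : Fin r → ℕ) (f : Fin (r/2) → Fin (r - r/2)) : Multiset (Fin r → ℕ) :=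
  (Finset.univ.val.map (fiberVec f)) +
  (Finset.univ.val.bind fun x : Fin r => Multiset.replicate (α x - 1) (unitVec x))

lemma target_low (f : Fin (r/2) → Fin (r - r/2)) (i : Fin (r - r/2)) :
    target f ⟨(i:ℕ), by omega⟩ = i := by
  simp [target]

lemma target_high (f : Fin (r/2) → Fin (r - r/2)) (j : Fin (r/2)) :
    target f ⟨r - r/2 + (j:ℕ), by omega⟩ = f j := by
  have h : ¬ (r - r/2 + (j:ℕ) < r - r/2) := by omega
  simp only [target, h, dif_neg, not_false_iff]
  congr 1
  exact Fin.ext (by simp)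

lemma fiberVec_ne_zero (f : Fin (r/2) → Fin (r - r/2)) (i : Fin (r - r/2)) :
    fiberVec f i ≠ 0 := by
  intro h
  have := congrFun h ⟨(i:ℕ), by omega⟩
  simp [fiberVec, target_low] at this

lemma unitVec_ne_zero (x : Fin r) : unitVec x ≠ 0 := by
  intro h
  have := congrFun h x
  simp [unitVec] at this

lemma mem_Fm_ne_zero (α : Fin r → ℕ) (f : Fin (r/2) → Fin (r - r/2)) :
    ∀ β ∈ Fm α f, β ≠ 0 := by
  intro β hβ
  rw [Fm, Multiset.mem_add] at hβ
  rcases hβ with h | h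
  · obtain ⟨i, _, rfl⟩ := Multiset.mem_map.mp h
    exact fiberVec_ne_zero f i
  · obtain ⟨x, _, hx⟩ := Multiset.mem_bind.mp h
    rw [Multiset.eq_of_mem_replicate hx]
    exact unitVec_ne_zero x

lemma Fm_sum (α : Fin r → ℕ) (hα : ∀ i, 1 ≤ α i) (f : Fin (r/2) → Fin (r - r/2)) :
    (Fm α f).sum = α := by
  have h1 : (Finset.univ.val.map (fiberVec f)).sum = ∑ i, fiberVec f i := rfl
  have h2 : (Finset.univ.val.bind fun x : Fin r =>
      Multiset.replicate (α x - 1) (unitVec x)).sum = ∑ x, (α x - 1) • unitVec x := by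
    rw [Multiset.sum_bind]
    have h3 : (Multiset.map (fun x => (Multiset.replicate (α x - 1) (unitVec x)).sum)
        Finset.univ.val).sum = ∑ x, (Multiset.replicate (α x - 1) (unitVec x)).sum := rfl
    rw [h3]
    apply Finset.sum_congr rfl
    intro x _
    rw [Multiset.sum_replicate]
  rw [Fm, Multiset.sum_add, h1, h2]
  funext y
  have e1 : (∑ i, fiberVec f i) y = ∑ i, fiberVec f i y := by
    simp [Finset.sum_apply]
  have e2 : (∑ x, (α x - 1) • unitVec x) y = ∑ x, (α x - 1) * unitVec x y := by
    simp [Finset.sum_apply]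
  simp only [Pi.add_apply, e1, e2]
  have e3 : ∑ i, fiberVec f i y = 1 := by
    simp only [fiberVec]
    rw [Finset.sum_ite_eq Finset.univ (target f y) (fun _ => 1)]
    simp
  have e4 : ∑ x, (α x - 1) * unitVec x y = α y - 1 := by
    simp only [unitVec]
    rw [Finset.sum_eq_single y]
    · simp
    · intro b _ hb
      simp [Ne.symm hb]
    · simp
  rw [e3, e4]
  have := hα y
  omega

lemma Fm_injective (α : Fin r → ℕ) : Function.Injective (Fm α) := by
  intro f f' h
  funext j
  have hlt0 : ((f j : ℕ)) < r := by omega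
  have hlt1 : r - r/2 + (j:ℕ) < r := by omega
  have hv : fiberVec f (f j) ∈ Fm α f' := by
    rw [← h, Fm, Multiset.mem_add]
    left
    exact Multiset.mem_map.mpr ⟨f j, by simp, rfl⟩
  have hvx0 : fiberVec f (f j) (⟨((f j : ℕ)), hlt0⟩ : Fin r) = 1 := by simp [fiberVec, target_low]
  have hvx1 : fiberVec f (f j) (⟨r - r/2 + (j:ℕ), hlt1⟩ : Fin r) = 1 := by simp [fiberVec, target_high]
  have hne : (⟨((f j : ℕ)), hlt0⟩ : Fin r) ≠ (⟨r - r/2 + (j:ℕ), hlt1⟩ : Fin r) := by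
    intro hc
    have h2 : ((f j : ℕ)) = r - r/2 + (j:ℕ) := congrArg Fin.val hc
    have h3 := (f j).isLt
    omega
  rw [Fm, Multiset.mem_add] at hv
  rcases hv with hv | hv
  · obtain ⟨i', _, hi'⟩ := Multiset.mem_map.mp hv
    have h0 : fiberVec f' i' (⟨((f j : ℕ)), hlt0⟩ : Fin r) = 1 := by rw [hi']; exact hvx0
    have h1 : fiberVec f' i' (⟨r - r/2 + (j:ℕ), hlt1⟩ : Fin r) = 1 := by rw [hi']; exact hvx1
    have t0 : target f' (⟨((f j : ℕ)), hlt0⟩ : Fin r) = i' := by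
      by_contra hc; simp [fiberVec, hc] at h0
    have t1 : target f' (⟨r - r/2 + (j:ℕ), hlt1⟩ : Fin r) = i' := by
      by_contra hc; simp [fiberVec, hc] at h1
    rw [target_low] at t0
    rw [target_high] at t1
    rw [t1, t0]
  · exfalso
    obtain ⟨x, _, hx⟩ := Multiset.mem_bind.mp hv
    have hvu := Multiset.eq_of_mem_replicate hx
    have h0 := congrFun hvu (⟨((f j : ℕ)), hlt0⟩ : Fin r)
    have h1 := congrFun hvu (⟨r - r/2 + (j:ℕ), hlt1⟩ : Fin r)
    rw [hvx0] at h0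
    rw [hvx1] at h1
    simp only [unitVec] at h0 h1
    have e0 : (⟨((f j : ℕ)), hlt0⟩ : Fin r) = x := by by_contra hc; simp [hc] at h0
    have e1 : (⟨r - r/2 + (j:ℕ), hlt1⟩ : Fin r) = x := by by_contra hc; simp [hc] at h1
    exact hne (e0.trans e1.symm)

lemma partSet_finite (α : Fin r → ℕ) :
    {s : Multiset (Fin r → ℕ) | (∀ β ∈ s, β ≠ 0) ∧ s.sum = α}.Finite := by
  classical
  set N := ∑ x, α x with hN
  set M : Multiset (Fin r → ℕ) := N • (Finset.Iic α).val with hM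
  apply Set.Finite.subset (Multiset.finite_toSet M.powerset)
  intro s hs
  obtain ⟨hs0, hssum⟩ := hs
  simp only [Set.mem_setOf_eq, Multiset.mem_powerset]
  have hcard : Multiset.card s ≤ N := by
    have key : (Multiset.card (s.map (fun v => ∑ x, v x))) • 1 ≤
        (s.map (fun v => ∑ x, v x)).sum := by
      apply Multiset.card_nsmul_le_sum
      intro y hy
      obtain ⟨v, hv, rfl⟩ := Multiset.mem_map.mp hy
      by_contra hc
      push_neg at hc
      have h0 : ∑ x, v x = 0 := by omega
      exact hs0 v hv (funext fun x => (Finset.sum_eq_zero_iff.mp h0) x (Finset.mem_univ x))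
    have hsum : (s.map (fun v => ∑ x, v x)).sum = N := by
      have h := map_multiset_sum
        (AddMonoidHom.mk (ZeroHom.mk (fun v : Fin r → ℕ => ∑ x, v x) (by simp))
          (fun a b => by simp [Finset.sum_add_distrib])) s
      simp only [AddMonoidHom.coe_mk, ZeroHom.coe_mk] at h
      rw [← h, hssum]
    rw [Multiset.card_map, smul_eq_mul, mul_one, hsum] at key
    exact key
  rw [Multiset.le_iff_count]
  intro β
  by_cases hβ : β ∈ s
  · have hle : Multiset.count β s ≤ N := le_trans (Multiset.count_le_card β s) hcard
    have hβα : β ≤ α := by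
      rw [← hssum]
      exact Multiset.single_le_sum (fun x _ => by intro i; simp) β hβ
    have : Multiset.count β M = N := by
      rw [hM, Multiset.count_nsmul]
      have : Multiset.count β (Finset.Iic α).val = 1 := by
        apply Multiset.count_eq_one_of_mem (Finset.Iic α).nodup
        simpa [Finset.mem_Iic] using hβα
      rw [this, mul_one]
    omega
  · simp [Multiset.count_eq_zero_of_notMem hβ]

lemma part1_nat (α : Fin r → ℕ) (hα : ∀ i, 1 ≤ α i) :
    (r - r/2)^(r/2) ≤ vecPartitions α := by
  classical
  have hrange : Set.range (Fm α) ⊆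
      {s : Multiset (Fin r → ℕ) | (∀ β ∈ s, β ≠ 0) ∧ s.sum = α} := by
    rintro _ ⟨f, rfl⟩
    exact ⟨mem_Fm_ne_zero α f, Fm_sum α hα f⟩
  calc (r - r/2)^(r/2) = Nat.card (Fin (r/2) → Fin (r - r/2)) := by
        simp [Nat.card_eq_fintype_card]
    _ = Nat.card (Set.range (Fm α)) := (Nat.card_range_of_injective (Fm_injective α)).symm
    _ = (Set.range (Fm α)).ncard := Nat.card_coe_set_eq _
    _ ≤ vecPartitions α := Set.ncard_le_ncard hrange (partSet_finite α)

lemma ceil_half (r : ℕ) : ⌈(r:ℝ)/2⌉₊ = r - r/2 := by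
  rcases Nat.even_or_odd r with ⟨q, hq⟩ | ⟨q, hq⟩
  · subst hq
    have h : ((q+q:ℕ):ℝ)/2 = (q:ℕ) := by push_cast; ring
    rw [h, Nat.ceil_natCast]
    omega
  · subst hq
    have h : (q+1 : ℕ) ≠ 0 := by omega
    have hrhs : 2*q+1 - (2*q+1)/2 = q+1 := by omega
    rw [hrhs, Nat.ceil_eq_iff h]
    constructor
    · simp only [Nat.add_sub_cancel]; push_cast; linarith
    · push_cast; linarith
  


lemma ev1 : ∀ᶠ y : ℝ in atTop, 4 * Real.log y ≤ y := by
  have h₁ := Real.isLittleO_log_id_atTop.def (by norm_num : (0:ℝ) < 1/4)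
  filter_upwards [h₁, eventually_ge_atTop (1:ℝ)] with y hy hy1
  simp only [Real.norm_eq_abs, id] at hy
  have h2 := le_abs_self (Real.log y)
  have h3 : |y| = y := abs_of_nonneg (by linarith)
  rw [h3] at hy
  linarith

lemma ev2 : ∀ᶠ y : ℝ in atTop, (Real.log y)^2 + 4 * Real.log y ≤ y := by
  have h₁ := (Real.isLittleO_pow_log_id_atTop (n := 2)).def (by norm_num : (0:ℝ) < 1/2)
  have h₂ := Real.isLittleO_log_id_atTop.def (by norm_num : (0:ℝ) < 1/8)
  filter_upwards [h₁, h₂, eventually_ge_atTop (1:ℝ)] with y hy hy' hy1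
  simp only [Real.norm_eq_abs, id] at hy hy'
  have h2 := le_abs_self (Real.log y)
  have h3 : |y| = y := abs_of_nonneg (by linarith)
  have h4 : |Real.log y ^ 2| = Real.log y ^ 2 := abs_of_nonneg (sq_nonneg _)
  rw [h3, h4] at hy
  rw [h3] at hy'
  linarith

lemma eventual_conds : ∀ᶠ x : ℝ in atTop,
    1 < x ∧ 2 ≤ Real.log x ∧ 2 ≤ Real.log (Real.log x) ∧
    1 ≤ Real.log (Real.log (Real.log x)) ∧
    4 * Real.log (Real.log (Real.log x)) ≤ Real.log (Real.log x) ∧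
    (Real.log (Real.log x))^2 + 4 * Real.log (Real.log x) ≤ Real.log x := by
  have hlog : Tendsto Real.log atTop atTop := Real.tendsto_log_atTop
  have hll : Tendsto (fun x => Real.log (Real.log x)) atTop atTop := hlog.comp hlog
  have hlll : Tendsto (fun x => Real.log (Real.log (Real.log x))) atTop atTop := hlog.comp hll
  refine (eventually_gt_atTop 1).and ((hlog.eventually_ge_atTop 2).and
    ((hll.eventually_ge_atTop 2).and ((hlll.eventually_ge_atTop 1).and
    ((hll.eventually ev1).and (hlog.eventually ev2)))))


set_option maxHeartbeats 1600000 in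
lemma part2_core (x : ℝ)
    (hc : 1 < x ∧ 2 ≤ Real.log x ∧ 2 ≤ Real.log (Real.log x) ∧
      1 ≤ Real.log (Real.log (Real.log x)) ∧
      4 * Real.log (Real.log (Real.log x)) ≤ Real.log (Real.log x) ∧
      (Real.log (Real.log x))^2 + 4 * Real.log (Real.log x) ≤ Real.log x)
    (r : ℕ)
    (hpart1 : (1 / Real.exp 1) * (((r - r/2 : ℕ) : ℝ) ^ (r / 2 : ℕ)) ≤ x) :
    (r : ℝ) ≤ (2 * Real.log x / Real.log (Real.log x)) *
      (1 + 2 * Real.log (Real.log (Real.log x)) / Real.log (Real.log x)) := by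
  set L := Real.log x with hL'
  set u := Real.log L with hu'
  set v := Real.log u with hv'
  obtain ⟨hx1, hL2, hu2, hv1, h4v, hLlow⟩ := hc
  set B := 2 * L / u * (1 + 2 * v / u) with hBdef
  clear_value B v u L
  by_contra hcon
  push_neg at hcon
  have hLpos : (0:ℝ) < L := by linarith
  have hupos : (0:ℝ) < u := by linarith
  have hvpos : (0:ℝ) < v := by linarith
  have huv : v ≤ u / 4 := by linarith
  -- B ≥ 3
  have hdivpos : (0:ℝ) < 2 * L / u := by positivity
  have honeple : (1:ℝ) ≤ 1 + 2 * v / u := by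
    have : (0:ℝ) ≤ 2 * v / u := by positivity
    linarith
  have hB2Lu : 2 * L / u ≤ B := by
    rw [hBdef]
    exact le_mul_of_one_le_right hdivpos.le honeple
  have h3u : 3 * u ≤ 2 * L := by nlinarith
  have hB3 : (3:ℝ) ≤ B := by
    refine le_trans ?_ hB2Lu
    rw [le_div_iff₀ hupos]
    linarith
  have hr4 : (4:ℝ) ≤ (r:ℕ) := by
    have : (3:ℝ) < (r:ℝ) := lt_of_le_of_lt hB3 hcon
    exact_mod_cast (by exact_mod_cast this : (3:ℕ) < r)
  have hrr : (4:ℝ) ≤ (r:ℝ) := hr4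
  set a : ℝ := (r:ℝ)/2 with ha'
  set b : ℝ := ((r:ℝ)-1)/2 with hb'
  have ha2 : (2:ℝ) ≤ a := by rw [ha']; linarith
  have hb0 : (0:ℝ) ≤ b := by rw [hb']; linarith
  -- step 1 :  b * log a ≤ L + 1
  have hM : a ≤ ((r - r/2 : ℕ) : ℝ) := by
    have h1 : ((r/2:ℕ):ℝ) ≤ (r:ℝ)/2 := by
      have := Nat.cast_div_le (m := r) (n := 2) (α := ℝ)
      simpa using this
    have h2 : ((r - r/2:ℕ):ℝ) = (r:ℝ) - ((r/2:ℕ):ℝ) := by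
      rw [Nat.cast_sub (Nat.div_le_self r 2)]
    rw [h2, ha']
    linarith
  have hK : b ≤ ((r/2:ℕ):ℝ) := by
    have h1 : r ≤ 2*(r/2) + 1 := by omega
    have h2 : (r:ℝ) ≤ 2*((r/2:ℕ):ℝ) + 1 := by exact_mod_cast h1
    rw [hb']; linarith
  have hstep : a ^ b ≤ ((r - r/2 : ℕ) : ℝ) ^ (r / 2 : ℕ) := by
    calc a ^ b ≤ a ^ (((r/2:ℕ):ℕ):ℝ) :=
          Real.rpow_le_rpow_of_exponent_le (by linarith) hK
      _ ≤ ((r - r/2 : ℕ) : ℝ) ^ (((r/2:ℕ):ℕ):ℝ) :=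
          Real.rpow_le_rpow (by linarith) hM (by positivity)
      _ = ((r - r/2 : ℕ) : ℝ) ^ (r / 2 : ℕ) := Real.rpow_natCast _ _
  have hUp : (1 / Real.exp 1) * a ^ b ≤ x := by
    refine le_trans ?_ hpart1
    have he : (0:ℝ) ≤ 1 / Real.exp 1 := by positivity
    exact mul_le_mul_of_nonneg_left hstep he
  have hapos : (0:ℝ) < a := by linarith
  have habpos : (0:ℝ) < a ^ b := Real.rpow_pos_of_pos hapos b
  have hlogUp : Real.log ((1 / Real.exp 1) * a ^ b) ≤ L := by
    rw [hL']
    exact Real.log_le_log (by positivity) hUp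
  rw [Real.log_mul (by positivity) (ne_of_gt habpos), Real.log_rpow hapos,
    one_div, Real.log_inv, Real.log_exp] at hlogUp
  have key1 : b * Real.log a ≤ L + 1 := by linarith
  -- step 2 : L + 2 ≤ ((B-1)/2) * (u - v)
  have hBexp : (B-1)*(u-v)*u^2 = (2*L*u+4*L*v)*(u-v) - (u-v)*u^2 := by
    rw [hBdef]; field_simp; ring
  have hX : 0 ≤ 2*u*v - 4*v^2 - u := by
    nlinarith [mul_nonneg (by linarith : (0:ℝ) ≤ u - 4*v) (by linarith : (0:ℝ) ≤ 2*v - 1),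
      mul_nonneg (by linarith : (0:ℝ) ≤ v - 1) (by linarith : (0:ℝ) ≤ v)]
  have hid : (2*L*u+4*L*v)*(u-v) - (u-v)*u^2 - (2*L+4)*u^2 =
      L*(2*u*v - 4*v^2 - u) + (L - u^2 - 4*u)*u + u^2*v := by ring
  have h2' : (2*L+4)*u^2 ≤ (2*L*u+4*L*v)*(u-v) - (u-v)*u^2 := by
    linarith [hid, mul_nonneg hLpos.le hX,
      mul_nonneg (by linarith : (0:ℝ) ≤ L - u^2 - 4*u) hupos.le,
      mul_nonneg (mul_nonneg hupos.le hupos.le) hvpos.le]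
  have h2'' : (2*L+4)*u^2 ≤ ((B-1)*(u-v))*u^2 := by
    linarith [hBexp, h2']
  have hu2pos : (0:ℝ) < u^2 := by positivity
  have key2 : L + 2 ≤ ((B-1)/2) * (u-v) := by
    have h5 : 2*L+4 ≤ (B-1)*(u-v) := le_of_mul_le_mul_right h2'' hu2pos
    linarith
  -- step 3 : ((B-1)/2)*(u-v) ≤ b * log a
  have huvnn : (0:ℝ) ≤ u - v := by linarith
  have hLu : (0:ℝ) < L/u := by positivity
  have hLuB : L/u ≤ B/2 := by
    have : 2*(L/u) ≤ B := by
      rw [mul_div_assoc] at hB2Lu; exact hB2Lu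
    linarith
  have hBa : B/2 ≤ a := by rw [ha']; linarith
  have hloga : u - v ≤ Real.log a := by
    have h1 : Real.log (L/u) = u - v := by
      rw [Real.log_div (ne_of_gt hLpos) (ne_of_gt hupos), ← hu', ← hv']
    rw [← h1]
    exact Real.log_le_log hLu (by linarith)
  have hmul : ((B-1)/2) * (u-v) ≤ b * Real.log a := by
    apply mul_le_mul
    · rw [hb']; linarith
    · exact hloga
    · exact huvnn
    · exact hb0
  linarith


lemma part1_real (r : ℕ) (α : Fin r → ℕ) (hα : ∀ i, 1 ≤ α i) :
    (1 / Real.exp 1) * ((⌈(r : ℝ) / 2⌉₊ : ℝ) ^ (r / 2 : ℕ)) ≤ (vecPartitions α : ℝ) := by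
  rw [ceil_half]
  have h := part1_nat α hα
  have h1 : (((r - r/2 : ℕ) : ℝ)) ^ (r / 2 : ℕ) ≤ (vecPartitions α : ℝ) := by
    exact_mod_cast h
  have he : (2:ℝ) ≤ Real.exp 1 := by
    have := Real.add_one_le_exp (1:ℝ)
    linarith
  have hx0 : (0:ℝ) ≤ (((r - r/2 : ℕ) : ℝ)) ^ (r / 2 : ℕ) := by positivity
  have hle1 : 1 / Real.exp 1 ≤ 1 := by
    rw [div_le_one (by positivity)]
    linarith
  nlinarith [mul_le_mul_of_nonneg_right hle1 hx0]

end VecPart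

theorem vecPartitions_bound_and_r_bound :
    (∀ (r : ℕ) (α : Fin r → ℕ), (∀ i, 1 ≤ α i) →
      (1 / Real.exp 1) * ((⌈(r : ℝ) / 2⌉₊ : ℝ) ^ (r / 2 : ℕ)) ≤ (vecPartitions α : ℝ)) ∧
    ∃ x₀ : ℝ, ∀ x : ℝ, x₀ ≤ x →
      ∀ (r : ℕ) (α : Fin r → ℕ), (∀ i, 1 ≤ α i) → (vecPartitions α : ℝ) ≤ x →
        (r : ℝ) ≤ (2 * Real.log x / Real.log (Real.log x)) *
          (1 + 2 * Real.log (Real.log (Real.log x)) / Real.log (Real.log x)) := by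
  constructor
  · exact fun r α hα => VecPart.part1_real r α hα
  · obtain ⟨x₀, hx₀⟩ := Filter.eventually_atTop.mp VecPart.eventual_conds
    refine ⟨x₀, fun x hx r α hα hp => ?_⟩
    apply VecPart.part2_core x (hx₀ x hx) r
    calc (1 / Real.exp 1) * (((r - r/2 : ℕ) : ℝ) ^ (r / 2 : ℕ))
        ≤ (vecPartitions α : ℝ) := by
          have h := VecPart.part1_real r α hα
          rwa [VecPart.ceil_half] at h
      _ ≤ x := hp
end
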